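/- For g ≥ 1, urSp(2g)[2] := ker(urSp(2g) → Sp(2g,ℤ/2ℤ)) is normally generated in urSp(2g) by Y_{1,1}² and Z_1, assuming that Γ_2(g) ⊂ GL(g,ℤ) is normally generated in GL(g,ℤ) by F_1. -/

import Mathlib

open Matrix

/-- The standard symplectic form matrix `J = [[0, I],[-I, 0]]`. -/
def Jmat (g : ℕ) : Matrix (Fin g ⊕ Fin g) (Fin g ⊕ Fin g) ℤ := fromBlocks 0 1 (-1) 0

/-- `Sp(2g, ℤ)` as a set of integer matrices. -/
def SpSet (g : ℕ) : Set (Matrix (Fin g ⊕ Fin g) (Fin g ⊕ Fin g) ℤ) :=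
  {X | IsUnit X.det ∧ Xᵀ * Jmat g * X = Jmat g}

/-- `urSp(2g)`: symplectic matrices with vanishing lower-left `g × g` block. -/
def urSpSet (g : ℕ) : Set (Matrix (Fin g ⊕ Fin g) (Fin g ⊕ Fin g) ℤ) :=
  {X | X ∈ SpSet g ∧ X.toBlocks₂₁ = 0}

/-- The explicit description: matrices `[[A, B],[0, ᵗA⁻¹]]` with `A` unimodular and
`A⁻¹ * B` symmetric. -/
def urSpSet' (g : ℕ) : Set (Matrix (Fin g ⊕ Fin g) (Fin g ⊕ Fin g) ℤ) :=
  {X | ∃ A B : Matrix (Fin g) (Fin g) ℤ, IsUnit A.det ∧ (A⁻¹ * B).IsSymm ∧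
    X = fromBlocks A B 0 (A⁻¹)ᵀ}

/-- `S_{i,j}`: the symmetric matrix with `1` at `(i,j)` and `(j,i)` and `0` elsewhere
(just a `1` at `(i,i)` when `i = j`). -/
def Smat (g : ℕ) (i j : Fin g) : Matrix (Fin g) (Fin g) ℤ :=
  Matrix.of fun k l => if (k = i ∧ l = j) ∨ (k = j ∧ l = i) then 1 else 0

/-- The elementary matrix `E_{i,j} = I + ℰ_{i,j}`. -/
def Emat (g : ℕ) (i j : Fin g) : Matrix (Fin g) (Fin g) ℤ := 1 + Matrix.single i j 1

/-- `F_i = I - 2 S_{i,i}`. -/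
def Fmat (g : ℕ) (i : Fin g) : Matrix (Fin g) (Fin g) ℤ := 1 - 2 • Matrix.single i i 1

/-- `A_{i,j} = I + S_{i,j} - S_{i,i} - S_{j,j}`, the transposition permutation matrix. -/
def Amat (g : ℕ) (i j : Fin g) : Matrix (Fin g) (Fin g) ℤ :=
  1 + Smat g i j - Smat g i i - Smat g j j

/-- `Y_{i,j} = [[I, S_{i,j}],[0, I]]`. -/
def Ymat (g : ℕ) (i j : Fin g) : Matrix (Fin g ⊕ Fin g) (Fin g ⊕ Fin g) ℤ :=
  fromBlocks 1 (Smat g i j) 0 1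

/-- `X_{i,j} = [[E_{i,j}, 0],[0, ᵗE_{i,j}⁻¹]]` (the paper's `-E_{j,i}` denotes `ᵗE_{i,j}⁻¹`). -/
noncomputable def Xmat (g : ℕ) (i j : Fin g) : Matrix (Fin g ⊕ Fin g) (Fin g ⊕ Fin g) ℤ :=
  fromBlocks (Emat g i j) 0 0 ((Emat g i j)⁻¹)ᵀ

/-- `Z_i = [[F_i, 0],[0, F_i]]`. -/
def Zmat (g : ℕ) (i : Fin g) : Matrix (Fin g ⊕ Fin g) (Fin g ⊕ Fin g) ℤ :=
  fromBlocks (Fmat g i) 0 0 (Fmat g i)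

/-- `S_g = {[[I, B],[0, I]] : B symmetric}`. -/
def SgSet (g : ℕ) : Set (Matrix (Fin g ⊕ Fin g) (Fin g ⊕ Fin g) ℤ) :=
  {X | ∃ B : Matrix (Fin g) (Fin g) ℤ, B.IsSymm ∧ X = fromBlocks 1 B 0 1}

/-- `GL(g, ℤ)` as the set of integer matrices with unit determinant. -/
def GLSet (g : ℕ) : Set (Matrix (Fin g) (Fin g) ℤ) := {X | IsUnit X.det}

/-- The level-`d` principal congruence subgroup `Γ_d(g)` of `GL(g, ℤ)`. -/
def GammaSet (d g : ℕ) : Set (Matrix (Fin g) (Fin g) ℤ) :=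
  {X | IsUnit X.det ∧ X.map (fun a : ℤ => (a : ZMod d)) = 1}

/-- The normal closure of `S` in the group `U` (a subset of invertible matrices),
described as the set of products of `U`-conjugates of elements of `S` and their inverses. -/
def ncl {n : Type*} [Fintype n] [DecidableEq n]
    (U S : Set (Matrix n n ℤ)) : Set (Matrix n n ℤ) :=
  ↑(Submonoid.closure {m | ∃ u ∈ U, ∃ y ∈ S, m = u * y * u⁻¹ ∨ m = u * y⁻¹ * u⁻¹})

/-!
Every `X = [[A, B], [0, ᵗA⁻¹]] ∈ urSp(2g)` factors as `[[1, C], [0, 1]] · [[A, 0], [0, ᵗA⁻¹]]`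
with `C = B ᵗA` symmetric. If `X ≡ 1 mod 2`, then `A ∈ Γ_2(g)` and `C = 2D` with `D` symmetric.
The map `A ↦ [[A, 0], [0, ᵗA⁻¹]]` sends `F_1` to `Z_1`, so the assumption puts the second factor
in the normal closure of `Z_1`. Conjugation by `[[u, 0], [0, ᵗu⁻¹]]` acts on the upper-right block
by `D ↦ u D ᵗu`, so the `D` with `[[1, 2D], [0, 1]]` in the normal closure form a
`GL(g, ℤ)`-congruence-stable subgroup; it contains `S_{1,1}` because of `Y_{1,1}²`, and such a
subgroup contains every symmetric matrix.
-/

namespace Matrix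

variable {n R : Type*} [DecidableEq n] [CommRing R]

section Symmetric

variable [Fintype n]

lemma permMatrix_mul_mul_transpose (σ : Equiv.Perm n) (M : Matrix n n R) :
    σ.permMatrix R * M * (σ.permMatrix R)ᵀ = M.submatrix σ σ := by
  rw [transpose_permMatrix, PEquiv.toMatrix_toPEquiv_mul, PEquiv.mul_toMatrix_toPEquiv]
  rfl

lemma isUnit_det_permMatrix (σ : Equiv.Perm n) : IsUnit (σ.permMatrix R).det := by
  rw [det_permutation]
  exact (Equiv.Perm.sign σ).isUnit.map (Int.castRingHom R)

lemma transvection_mul_single_mul_transpose (i j : n) :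
    transvection j i (1 : R) * single i i 1 * (transvection j i 1)ᵀ =
      single i i 1 + single j j 1 + (single i j 1 + single j i 1) := by
  simp only [transvection, transpose_add, transpose_one, transpose_single, add_mul, mul_add,
    one_mul, mul_one, single_mul_single_same]
  abel

lemma sum_smul_single_add_single (f : n → n → R) :
    ∑ i, ∑ j, f i j • (single i j (1 : R) + single j i 1) = of fun k l => f k l + f l k := by
  ext k l
  simp [Matrix.sum_apply, single_apply, Finset.sum_add_distrib, ite_and]

lemma IsSymm.eq_sum_single [LinearOrder n] {M : Matrix n n R} (hM : M.IsSymm) :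
    M = ∑ i, M i i • single i i 1 +
      ∑ i, ∑ j, (if i < j then M i j else 0) • (single i j 1 + single j i 1) := by
  rw [sum_smul_single_add_single]
  ext k l
  rcases lt_trichotomy k l with h | rfl | h
  · simp [single_apply, Matrix.sum_apply, ite_and, h, h.ne, h.not_gt]
  · simp [single_apply, Matrix.sum_apply]
  · simp [single_apply, Matrix.sum_apply, ite_and, h, h.ne', h.not_gt, hM.apply k l]

/-- Permutation matrices move `single z z 1` along the diagonal; transvections then produce the
off-diagonal pairs `single i j 1 + single j i 1`. -/
lemma isSymm_mem_of_single_mem [LinearOrder n] (H : Submodule R (Matrix n n R))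
    (hconj : ∀ u : Matrix n n R, IsUnit u.det → ∀ M ∈ H, u * M * uᵀ ∈ H)
    {z : n} (hz : single z z 1 ∈ H) {M : Matrix n n R} (hM : M.IsSymm) : M ∈ H := by
  have hdiag : ∀ i, single i i 1 ∈ H := fun i => by
    have := hconj _ (isUnit_det_permMatrix (Equiv.swap z i)) _ hz
    rwa [permMatrix_mul_mul_transpose, submatrix_single_equiv, Equiv.symm_swap,
      Equiv.swap_apply_left] at this
  have hoff : ∀ i j, i ≠ j → single i j 1 + single j i 1 ∈ H := fun i j h => by
    have := hconj _ (by rw [det_transvection_of_ne _ _ h.symm 1]; exact isUnit_one) _ (hdiag i)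
    rw [transvection_mul_single_mul_transpose] at this
    simpa using H.sub_mem this (H.add_mem (hdiag i) (hdiag j))
  rw [hM.eq_sum_single]
  refine H.add_mem (H.sum_mem fun i _ => H.smul_mem _ (hdiag i))
    (H.sum_mem fun i _ => H.sum_mem fun j _ => ?_)
  split_ifs with hij
  · exact H.smul_mem _ (hoff i j hij.ne)
  · rw [zero_smul]
    exact H.zero_mem

end Symmetric

def upperUnipotent (C : Matrix n n R) : Matrix (n ⊕ n) (n ⊕ n) R := fromBlocks 1 C 0 1

lemma upperUnipotent_zero : upperUnipotent (0 : Matrix n n R) = 1 := fromBlocks_one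

variable [Fintype n]

lemma upperUnipotent_add (C D : Matrix n n R) :
    upperUnipotent (C + D) = upperUnipotent C * upperUnipotent D := by
  simp [upperUnipotent, fromBlocks_multiply, add_comm]

lemma mapMatrix_upperUnipotent {S : Type*} [CommRing S] (f : R →+* S) (C : Matrix n n R) :
    f.mapMatrix (upperUnipotent C) = upperUnipotent (f.mapMatrix C) := by
  simp [upperUnipotent, fromBlocks_map]

lemma upperUnipotent_inv (C : Matrix n n R) : (upperUnipotent C)⁻¹ = upperUnipotent (-C) :=
  inv_eq_right_inv (by rw [← upperUnipotent_add, add_neg_cancel, upperUnipotent_zero])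

variable (n R) in
/-- Multiplicative on all matrices, not only invertible ones: `Matrix.mul_inv_rev` holds
unconditionally. -/
noncomputable def diagInvTransposeHom : Matrix n n R →* Matrix (n ⊕ n) (n ⊕ n) R where
  toFun u := fromBlocks u 0 0 (u⁻¹)ᵀ
  map_one' := by simp
  map_mul' a b := by simp [fromBlocks_multiply, Matrix.mul_inv_rev]

lemma diagInvTransposeHom_apply (u : Matrix n n R) :
    diagInvTransposeHom n R u = fromBlocks u 0 0 (u⁻¹)ᵀ := rfl

lemma diagInvTransposeHom_conj_upperUnipotent {u : Matrix n n R} (hu : IsUnit u.det)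
    (C : Matrix n n R) :
    diagInvTransposeHom n R u * upperUnipotent C * (diagInvTransposeHom n R u)⁻¹ =
      upperUnipotent (u * C * uᵀ) := by
  rw [inv_eq_right_inv (by rw [← map_mul, mul_nonsing_inv _ hu, map_one])]
  simp [diagInvTransposeHom_apply, upperUnipotent, fromBlocks_multiply,
    nonsing_inv_nonsing_inv _ hu, mul_nonsing_inv _ hu, ← transpose_mul, Matrix.mul_assoc]

end Matrix

section NormalClosure

variable {n : Type*} [Fintype n] [DecidableEq n] {U S : Set (Matrix n n ℤ)}

lemma one_mem_ncl : (1 : Matrix n n ℤ) ∈ ncl U S := Submonoid.one_mem _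

lemma conj_mem_ncl {u y : Matrix n n ℤ} (hu : u ∈ U) (hy : y ∈ S) : u * y * u⁻¹ ∈ ncl U S :=
  Submonoid.subset_closure ⟨u, hu, y, hy, Or.inl rfl⟩

lemma ncl_mul_mem {a b : Matrix n n ℤ} (ha : a ∈ ncl U S) (hb : b ∈ ncl U S) :
    a * b ∈ ncl U S :=
  Submonoid.mul_mem _ ha hb

lemma ncl_mono {S' : Set (Matrix n n ℤ)} (h : S ⊆ S') : ncl U S ⊆ ncl U S' :=
  Submonoid.closure_mono fun _ ⟨u, hu, y, hy, hm⟩ => ⟨u, hu, y, h hy, hm⟩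

lemma ncl_subset_of_conj_mem (T : Submonoid (Matrix n n ℤ))
    (h : ∀ u ∈ U, ∀ y ∈ S, u * y * u⁻¹ ∈ T ∧ u * y⁻¹ * u⁻¹ ∈ T) : ncl U S ⊆ T :=
  Submonoid.closure_le.2 fun _ ⟨u, hu, y, hy, hm⟩ => by
    rcases hm with rfl | rfl
    exacts [(h u hu y hy).1, (h u hu y hy).2]

lemma inv_mem_ncl (hU : ∀ u ∈ U, IsUnit u.det) (hS : ∀ y ∈ S, IsUnit y.det)
    {m : Matrix n n ℤ} (hm : m ∈ ncl U S) : m⁻¹ ∈ ncl U S := by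
  induction hm using Submonoid.closure_induction with
  | one => simpa using one_mem_ncl
  | mul a b _ _ ha hb =>
    rw [Matrix.mul_inv_rev]
    exact ncl_mul_mem hb ha
  | mem m hm =>
    obtain ⟨u, hu, y, hy, rfl | rfl⟩ := hm
    · refine Submonoid.subset_closure ⟨u, hu, y, hy, Or.inr ?_⟩
      simp only [Matrix.mul_inv_rev, nonsing_inv_nonsing_inv _ (hU u hu), Matrix.mul_assoc]
    · refine Submonoid.subset_closure ⟨u, hu, y, hy, Or.inl ?_⟩
      simp only [Matrix.mul_inv_rev, nonsing_inv_nonsing_inv _ (hU u hu),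
        nonsing_inv_nonsing_inv _ (hS y hy), Matrix.mul_assoc]

lemma conj_mem_ncl_of_mem (hU : ∀ a ∈ U, ∀ b ∈ U, a * b ∈ U) {w : Matrix n n ℤ} (hw : w ∈ U)
    (hw' : IsUnit w.det) {m : Matrix n n ℤ} (hm : m ∈ ncl U S) : w * m * w⁻¹ ∈ ncl U S := by
  induction hm using Submonoid.closure_induction with
  | one => simpa [mul_nonsing_inv _ hw'] using one_mem_ncl
  | mul a b _ _ ha hb =>
    convert ncl_mul_mem ha hb using 1
    simp only [Matrix.mul_assoc, nonsing_inv_mul_cancel_left _ _ hw']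
  | mem m hm =>
    obtain ⟨u, hu, y, hy, rfl | rfl⟩ := hm
    · exact Submonoid.subset_closure ⟨w * u, hU w hw u hu, y, hy, Or.inl (by
        simp only [Matrix.mul_inv_rev, Matrix.mul_assoc])⟩
    · exact Submonoid.subset_closure ⟨w * u, hU w hw u hu, y, hy, Or.inr (by
        simp only [Matrix.mul_inv_rev, Matrix.mul_assoc])⟩

lemma map_mem_ncl {m : Type*} [Fintype m] [DecidableEq m] {U' S' : Set (Matrix m m ℤ)}
    (f : Matrix n n ℤ →* Matrix m m ℤ) (hU : ∀ u ∈ U, IsUnit u.det) (hS : ∀ y ∈ S, IsUnit y.det)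
    (hfU : ∀ u ∈ U, f u ∈ U') (hfS : ∀ y ∈ S, f y ∈ S') {x : Matrix n n ℤ} (hx : x ∈ ncl U S) :
    f x ∈ ncl U' S' := by
  have map_inv : ∀ v : Matrix n n ℤ, IsUnit v.det → f v⁻¹ = (f v)⁻¹ := fun v hv =>
    (inv_eq_right_inv (by rw [← map_mul, mul_nonsing_inv _ hv, map_one])).symm
  induction hx using Submonoid.closure_induction with
  | one => simpa using one_mem_ncl
  | mul a b _ _ ha hb => simpa using ncl_mul_mem ha hb
  | mem x hx =>
    obtain ⟨u, hu, y, hy, rfl | rfl⟩ := hx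
    · exact Submonoid.subset_closure ⟨f u, hfU u hu, f y, hfS y hy, Or.inl (by
        simp [map_inv u (hU u hu)])⟩
    · exact Submonoid.subset_closure ⟨f u, hfU u hu, f y, hfS y hy, Or.inr (by
        simp [map_inv u (hU u hu), map_inv y (hS y hy)])⟩

end NormalClosure

section UpperSymplectic

variable {g : ℕ}

lemma mem_SpSet_iff {X : Matrix (Fin g ⊕ Fin g) (Fin g ⊕ Fin g) ℤ} :
    X ∈ SpSet g ↔ X ∈ symplecticGroup (Fin g) ℤ := by
  have hJ : Jmat g = -J (Fin g) ℤ := by simp [Jmat, J, fromBlocks_neg]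
  rw [SymplecticGroup.mem_iff', SpSet, Set.mem_ofPred_eq, hJ, Matrix.mul_neg, Matrix.neg_mul,
    neg_inj]
  exact ⟨And.right, fun h => ⟨SymplecticGroup.symplectic_det (SymplecticGroup.mem_iff'.2 h), h⟩⟩

lemma mem_urSpSet_iff {X : Matrix (Fin g ⊕ Fin g) (Fin g ⊕ Fin g) ℤ} :
    X ∈ urSpSet g ↔ X ∈ symplecticGroup (Fin g) ℤ ∧ X.toBlocks₂₁ = 0 := by
  rw [← mem_SpSet_iff]
  rfl

lemma fromBlocks_mem_urSpSet_iff {A B C D : Matrix (Fin g) (Fin g) ℤ} :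
    fromBlocks A B C D ∈ urSpSet g ↔ C = 0 ∧ Bᵀ * D = Dᵀ * B ∧ Aᵀ * D = 1 := by
  rw [mem_urSpSet_iff, SymplecticGroup.fromBlocks_mem_iff, toBlocks_fromBlocks₂₁]
  constructor
  · rintro ⟨⟨-, hBD, hAD⟩, rfl⟩
    simpa [hBD] using hAD
  · rintro ⟨rfl, hBD, hAD⟩
    simp [hBD, hAD]

lemma isUnit_det_of_mem_urSpSet {X : Matrix (Fin g ⊕ Fin g) (Fin g ⊕ Fin g) ℤ}
    (hX : X ∈ urSpSet g) : IsUnit X.det :=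
  hX.1.1

lemma one_mem_urSpSet : (1 : Matrix (Fin g ⊕ Fin g) (Fin g ⊕ Fin g) ℤ) ∈ urSpSet g := by
  simp [← fromBlocks_one, fromBlocks_mem_urSpSet_iff]

lemma mul_mem_urSpSet {X Y : Matrix (Fin g ⊕ Fin g) (Fin g ⊕ Fin g) ℤ} (hX : X ∈ urSpSet g)
    (hY : Y ∈ urSpSet g) : X * Y ∈ urSpSet g := by
  rw [mem_urSpSet_iff] at *
  refine ⟨mul_mem hX.1 hY.1, ?_⟩
  rw [← fromBlocks_toBlocks X, ← fromBlocks_toBlocks Y, hX.2, hY.2, fromBlocks_multiply]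
  simp

lemma inv_mem_urSpSet {X : Matrix (Fin g ⊕ Fin g) (Fin g ⊕ Fin g) ℤ} (hX : X ∈ urSpSet g) :
    X⁻¹ ∈ urSpSet g := by
  rw [mem_urSpSet_iff] at *
  refine ⟨SymplecticGroup.coe_inv' ⟨X, hX.1⟩ ▸ (⟨X, hX.1⟩⁻¹ : symplecticGroup _ _).2, ?_⟩
  rw [SymplecticGroup.inv_eq_symplectic_inv X hX.1, ← fromBlocks_toBlocks X, hX.2, J]
  simp [fromBlocks_transpose, fromBlocks_multiply, fromBlocks_neg]

lemma diagInvTransposeHom_mem_urSpSet {u : Matrix (Fin g) (Fin g) ℤ} (hu : IsUnit u.det) :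
    diagInvTransposeHom _ _ u ∈ urSpSet g := by
  rw [diagInvTransposeHom_apply, fromBlocks_mem_urSpSet_iff]
  simp [← transpose_mul, nonsing_inv_mul _ hu]

lemma upperUnipotent_mem_urSpSet_iff {C : Matrix (Fin g) (Fin g) ℤ} :
    upperUnipotent C ∈ urSpSet g ↔ C.IsSymm := by
  simp [upperUnipotent, fromBlocks_mem_urSpSet_iff, Matrix.IsSymm]

end UpperSymplectic

section Generators

variable {g : ℕ}

lemma Smat_self (i : Fin g) : Smat g i i = single i i 1 := by
  ext k l
  simp [Smat, single_apply, eq_comm]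

lemma Ymat_self_sq (i : Fin g) : Ymat g i i ^ 2 = upperUnipotent (2 • single i i 1) := by
  rw [sq, two_smul, upperUnipotent_add, Ymat, Smat_self]
  rfl

lemma Fmat_mul_self (i : Fin g) : Fmat g i * Fmat g i = 1 := by
  simp only [Fmat, sub_mul, mul_sub, one_mul, mul_one, smul_mul_smul, single_mul_single_same]
  module

lemma Zmat_eq (i : Fin g) : Zmat g i = diagInvTransposeHom _ _ (Fmat g i) := by
  rw [diagInvTransposeHom_apply, inv_eq_right_inv (Fmat_mul_self i)]
  simp [Zmat, Fmat, transpose_single]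

lemma isUnit_det_Fmat (i : Fin g) : IsUnit (Fmat g i).det :=
  isUnit_det_of_right_inverse (Fmat_mul_self i)

end Generators

section LevelTwo

variable {n : Type*} [Fintype n] [DecidableEq n]

lemma mapMatrix_two_nsmul (X : Matrix n n ℤ) :
    (Int.castRingHom (ZMod 2)).mapMatrix (2 • X) = 0 := by
  rw [map_nsmul, ← Nat.cast_smul_eq_nsmul (ZMod 2), ZMod.natCast_self, zero_smul]

lemma exists_isSymm_eq_two_smul {C : Matrix n n ℤ} (hC : C.IsSymm)
    (h2 : (Int.castRingHom (ZMod 2)).mapMatrix C = 0) :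
    ∃ D : Matrix n n ℤ, D.IsSymm ∧ C = 2 • D := by
  have hdvd : ∀ k l, (2 : ℤ) ∣ C k l := fun k l =>
    (ZMod.intCast_zmod_eq_zero_iff_dvd _ 2).1 (congrFun (congrFun h2 k) l)
  refine ⟨of fun k l => C k l / 2, ?_, ?_⟩
  · ext k l
    simp [hC.apply k l]
  · ext k l
    simp [Int.mul_ediv_cancel' (hdvd k l)]

variable {g : ℕ}

lemma mapMatrix_Fmat (i : Fin g) : (Int.castRingHom (ZMod 2)).mapMatrix (Fmat g i) = 1 := by
  rw [Fmat, map_sub, map_one, mapMatrix_two_nsmul, sub_zero]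

/-- `urSp(2g)[2]`, the kernel of reduction mod `2` on `urSp(2g)`. -/
def urSpLevelTwo (g : ℕ) : Submonoid (Matrix (Fin g ⊕ Fin g) (Fin g ⊕ Fin g) ℤ) where
  carrier := {X | X ∈ urSpSet g ∧ (Int.castRingHom (ZMod 2)).mapMatrix X = 1}
  mul_mem' hX hY := ⟨mul_mem_urSpSet hX.1 hY.1, by rw [map_mul, hX.2, hY.2, one_mul]⟩
  one_mem' := ⟨one_mem_urSpSet, map_one _⟩

lemma inv_mem_urSpLevelTwo {X : Matrix (Fin g ⊕ Fin g) (Fin g ⊕ Fin g) ℤ}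
    (hX : X ∈ urSpLevelTwo g) : X⁻¹ ∈ urSpLevelTwo g := by
  refine ⟨inv_mem_urSpSet hX.1, ?_⟩
  have h := congrArg (Int.castRingHom (ZMod 2)).mapMatrix
    (nonsing_inv_mul X (isUnit_det_of_mem_urSpSet hX.1))
  rwa [map_mul, hX.2, mul_one, map_one] at h

lemma conj_mem_urSpLevelTwo {u X : Matrix (Fin g ⊕ Fin g) (Fin g ⊕ Fin g) ℤ}
    (hu : u ∈ urSpSet g) (hX : X ∈ urSpLevelTwo g) : u * X * u⁻¹ ∈ urSpLevelTwo g := by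
  refine ⟨mul_mem_urSpSet (mul_mem_urSpSet hu hX.1) (inv_mem_urSpSet hu), ?_⟩
  rw [map_mul, map_mul, hX.2, mul_one, ← map_mul,
    mul_nonsing_inv _ (isUnit_det_of_mem_urSpSet hu), map_one]

lemma Ymat_self_sq_mem_urSpLevelTwo (i : Fin g) : Ymat g i i ^ 2 ∈ urSpLevelTwo g := by
  rw [Ymat_self_sq]
  have hsymm : (single i i (1 : ℤ)).IsSymm := by simp [IsSymm, transpose_single]
  refine ⟨upperUnipotent_mem_urSpSet_iff.2 (hsymm.smul 2), ?_⟩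
  rw [mapMatrix_upperUnipotent, mapMatrix_two_nsmul, upperUnipotent_zero]

lemma Zmat_mem_urSpLevelTwo (i : Fin g) : Zmat g i ∈ urSpLevelTwo g := by
  refine ⟨Zmat_eq i ▸ diagInvTransposeHom_mem_urSpSet (isUnit_det_Fmat i), ?_⟩
  rw [RingHom.mapMatrix_apply, Zmat, fromBlocks_map, ← RingHom.mapMatrix_apply, mapMatrix_Fmat]
  simp

end LevelTwo

section Factorization

variable {g : ℕ}

lemma eq_upperUnipotent_mul_of_mem_urSpSet {X : Matrix (Fin g ⊕ Fin g) (Fin g ⊕ Fin g) ℤ}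
    (hX : X ∈ urSpSet g) :
    IsUnit X.toBlocks₁₁.det ∧ (X.toBlocks₁₂ * X.toBlocks₁₁ᵀ).IsSymm ∧
      X = upperUnipotent (X.toBlocks₁₂ * X.toBlocks₁₁ᵀ) * diagInvTransposeHom _ _ X.toBlocks₁₁ := by
  obtain ⟨A, B, D, rfl⟩ : ∃ A B D, X = fromBlocks A B 0 D :=
    ⟨_, _, _, by rw [← hX.2, fromBlocks_toBlocks]⟩
  obtain ⟨-, hBD, hAD⟩ := fromBlocks_mem_urSpSet_iff.1 hX
  simp only [toBlocks_fromBlocks₁₁, toBlocks_fromBlocks₁₂]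
  have hDA : D * Aᵀ = 1 := mul_eq_one_comm.1 hAD
  have hD : (A⁻¹)ᵀ = D := by rw [transpose_nonsing_inv, inv_eq_right_inv hAD]
  refine ⟨by simpa using isUnit_det_of_right_inverse hAD, ?_, ?_⟩
  · calc (B * Aᵀ)ᵀ = A * Bᵀ * (D * Aᵀ) := by rw [hDA, mul_one, transpose_mul, transpose_transpose]
      _ = (D * Aᵀ)ᵀ * B * Aᵀ := by rw [transpose_mul, transpose_transpose, Matrix.mul_assoc A,
            ← Matrix.mul_assoc Bᵀ, hBD, Matrix.mul_assoc, Matrix.mul_assoc, Matrix.mul_assoc]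
      _ = B * Aᵀ := by rw [hDA, transpose_one, one_mul]
  · simp [upperUnipotent, diagInvTransposeHom_apply, fromBlocks_multiply, hD, Matrix.mul_assoc,
      hAD]

lemma exists_eq_upperUnipotent_two_smul_mul
    {X : Matrix (Fin g ⊕ Fin g) (Fin g ⊕ Fin g) ℤ} (hX : X ∈ urSpLevelTwo g) :
    ∃ D : Matrix (Fin g) (Fin g) ℤ, D.IsSymm ∧ X.toBlocks₁₁ ∈ GammaSet 2 g ∧
      X = upperUnipotent (2 • D) * diagInvTransposeHom _ _ X.toBlocks₁₁ := by
  obtain ⟨hA, hC, hXeq⟩ := eq_upperUnipotent_mul_of_mem_urSpSet hX.1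
  have h11 : (Int.castRingHom (ZMod 2)).mapMatrix X.toBlocks₁₁ = 1 := by
    have := congrArg toBlocks₁₁ hX.2
    rwa [← fromBlocks_one, toBlocks_fromBlocks₁₁] at this
  have h12 : (Int.castRingHom (ZMod 2)).mapMatrix X.toBlocks₁₂ = 0 := by
    have := congrArg toBlocks₁₂ hX.2
    rwa [← fromBlocks_one, toBlocks_fromBlocks₁₂] at this
  obtain ⟨D, hD, hCD⟩ := exists_isSymm_eq_two_smul hC (by rw [map_mul, h12, zero_mul])
  exact ⟨D, hD, ⟨hA, h11⟩, hCD ▸ hXeq⟩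

lemma upperUnipotent_two_smul_mem_ncl
    {S : Set (Matrix (Fin g ⊕ Fin g) (Fin g ⊕ Fin g) ℤ)} (hS : S ⊆ urSpSet g) {z : Fin g}
    (hz : upperUnipotent (2 • single z z 1) ∈ S) {D : Matrix (Fin g) (Fin g) ℤ} (hD : D.IsSymm) :
    upperUnipotent (2 • D) ∈ ncl (urSpSet g) S := by
  let H : AddSubgroup (Matrix (Fin g) (Fin g) ℤ) :=
    { carrier := {D | upperUnipotent (2 • D) ∈ ncl (urSpSet g) S}
      add_mem' := fun ha hb => by
        simpa only [Set.mem_ofPred_eq, smul_add, upperUnipotent_add] using ncl_mul_mem ha hb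
      zero_mem' := by simpa [upperUnipotent_zero] using one_mem_ncl
      neg_mem' := fun ha => by
        simpa [upperUnipotent_inv] using inv_mem_ncl (fun _ => isUnit_det_of_mem_urSpSet)
          (fun _ hy => isUnit_det_of_mem_urSpSet (hS hy)) ha }
  refine isSymm_mem_of_single_mem H.toIntSubmodule (fun u hu M hM => ?_) (z := z) ?_ hD
  · have := conj_mem_ncl_of_mem (fun _ ha _ hb => mul_mem_urSpSet ha hb)
      (diagInvTransposeHom_mem_urSpSet hu) (isUnit_det_of_mem_urSpSet
        (diagInvTransposeHom_mem_urSpSet hu)) hM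
    rwa [diagInvTransposeHom_conj_upperUnipotent hu, Matrix.mul_smul, Matrix.smul_mul] at this
  · have := conj_mem_ncl one_mem_urSpSet hz
    rwa [one_mul, inv_one, mul_one] at this

lemma diagInvTransposeHom_mem_ncl {i : Fin g} {A : Matrix (Fin g) (Fin g) ℤ}
    (hA : A ∈ ncl (GLSet g) {Fmat g i}) :
    diagInvTransposeHom _ _ A ∈ ncl (urSpSet g) {Zmat g i} :=
  map_mem_ncl _ (fun _ hu => hu) (by simp [isUnit_det_Fmat])
    (fun _ => diagInvTransposeHom_mem_urSpSet) (by simp [Zmat_eq]) hA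

end Factorization

/-- If `Γ_2(g)` is the normal closure of `F_1` in `GL(g, ℤ)`, then `urSp(2g)[2]` is the
normal closure of `Y_{1,1}²` and `Z_1` in `urSp(2g)`. -/
theorem stmt14 (g : ℕ) (hg : 1 ≤ g)
    (hGamma : GammaSet 2 g = ncl (GLSet g) {Fmat g ⟨0, by omega⟩}) :
    {X | X ∈ urSpSet g ∧ X.map (fun a : ℤ => (a : ZMod 2)) = 1} =
      ncl (urSpSet g)
        {Ymat g ⟨0, by omega⟩ ⟨0, by omega⟩ ^ 2, Zmat g ⟨0, by omega⟩} := by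
  set z : Fin g := ⟨0, by omega⟩
  have hS : {Ymat g z z ^ 2, Zmat g z} ⊆ (urSpLevelTwo g : Set _) := by
    rintro _ (rfl | rfl)
    exacts [Ymat_self_sq_mem_urSpLevelTwo z, Zmat_mem_urSpLevelTwo z]
  apply subset_antisymm
  · intro X hX
    obtain ⟨D, hD, hA, hXeq⟩ := exists_eq_upperUnipotent_two_smul_mul hX
    rw [hXeq]
    refine ncl_mul_mem (upperUnipotent_two_smul_mem_ncl (hS.trans fun _ h => h.1) (z := z) ?_ hD)
      (ncl_mono (by simp) (diagInvTransposeHom_mem_ncl (hGamma ▸ hA)))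
    simp [Ymat_self_sq]
  · exact ncl_subset_of_conj_mem (urSpLevelTwo g) fun u hu y hy =>
      ⟨conj_mem_urSpLevelTwo hu (hS hy), conj_mem_urSpLevelTwo hu (inv_mem_urSpLevelTwo (hS hy))⟩
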